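/- arXiv:math/9912047 — 4 statements merged into one kernel-verified Lean document; each statement's English description precedes it below -/
import Mathlib

section
/- If G is a graph and S₀ is a stable set of minimum cardinality among all stable sets S with |S| > |N(S)| (such a set existing), then S₀ is contained in every maximum stable set of G; equivalently S₀ ⊆ core(G). -/
/-!
Let `A` be a maximum stable set. Trading `A ∩ N(S₀)` for `S₀ \ A` gives the stable set
`(A \ N(S₀)) ∪ S₀`, so `|S₀ \ A| ≤ |A ∩ N(S₀)|`. As `A` is stable, `N(S₀ ∩ A)` lies in
`N(S₀) \ A`, whence `|N(S₀ ∩ A)| ≤ |N(S₀)| - |A ∩ N(S₀)| < |S₀| - |S₀ \ A| = |S₀ ∩ A|`.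
Minimality of `S₀` then forces `S₀ ∩ A = S₀`.
-/

open Finset

variable {V : Type*} [Fintype V] [DecidableEq V]

def stable (G : SimpleGraph V) (S : Finset V) : Prop :=
  ∀ a ∈ S, ∀ b ∈ S, ¬ G.Adj a b

open Classical in
noncomputable def nbhd (G : SimpleGraph V) (A : Finset V) : Finset V :=
  Finset.univ.filter fun v => ∃ a ∈ A, G.Adj a v

open Classical in
noncomputable def alpha (G : SimpleGraph V) : ℕ :=
  Finset.univ.sup fun S : Finset V => if stable G S then S.card else 0

def maxStable (G : SimpleGraph V) (S : Finset V) : Prop :=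
  stable G S ∧ S.card = alpha G

open Classical in
noncomputable def core (G : SimpleGraph V) : Finset V :=
  Finset.univ.filter fun v => ∀ S : Finset V, maxStable G S → v ∈ S

def isolated (G : SimpleGraph V) (v : V) : Prop := ∀ w, ¬ G.Adj v w

open Classical in
noncomputable def isol (G : SimpleGraph V) : Finset V :=
  Finset.univ.filter fun v => isolated G v

omit [Fintype V] [DecidableEq V] in
theorem stable.mono {G : SimpleGraph V} {S T : Finset V} (hS : stable G S) (hTS : T ⊆ S) :
    stable G T :=
  fun a ha b hb => hS a (hTS ha) b (hTS hb)

omit [DecidableEq V] in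
theorem mem_nbhd {G : SimpleGraph V} {A : Finset V} {v : V} :
    v ∈ nbhd G A ↔ ∃ a ∈ A, G.Adj a v := by
  simp [nbhd]

omit [DecidableEq V] in
theorem nbhd_mono {G : SimpleGraph V} {S T : Finset V} (hST : S ⊆ T) : nbhd G S ⊆ nbhd G T :=
  fun _ hv => by
    obtain ⟨a, ha, hav⟩ := mem_nbhd.1 hv
    exact mem_nbhd.2 ⟨a, hST ha, hav⟩

omit [DecidableEq V] in
theorem stable.disjoint_nbhd_of_subset {G : SimpleGraph V} {A T : Finset V} (hA : stable G A)
    (hTA : T ⊆ A) : Disjoint (nbhd G T) A :=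
  disjoint_left.2 fun _ hv hvA => by
    obtain ⟨a, ha, hav⟩ := mem_nbhd.1 hv
    exact hA a (hTA ha) _ hvA hav

theorem stable.sdiff_nbhd_union {G : SimpleGraph V} {A S : Finset V} (hA : stable G A)
    (hS : stable G S) : stable G (A \ nbhd G S ∪ S) := by
  have hout : ∀ a ∈ A \ nbhd G S, ∀ b ∈ S, ¬ G.Adj a b := fun a ha b hb hab =>
    (mem_sdiff.1 ha).2 (mem_nbhd.2 ⟨b, hb, hab.symm⟩)
  intro a ha b hb hab
  rcases mem_union.1 ha with ha | ha <;> rcases mem_union.1 hb with hb | hb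
  · exact hA a (mem_sdiff.1 ha).1 b (mem_sdiff.1 hb).1 hab
  · exact hout a ha b hb hab
  · exact hout b hb a ha hab.symm
  · exact hS a ha b hb hab

omit [DecidableEq V] in
theorem card_le_alpha {G : SimpleGraph V} {S : Finset V} (hS : stable G S) : S.card ≤ alpha G := by
  classical
  simpa [alpha, hS] using le_sup (f := fun S : Finset V => if stable G S then S.card else 0)
    (mem_univ S)

theorem subset_core_iff {G : SimpleGraph V} {S : Finset V} :
    S ⊆ core G ↔ ∀ A, maxStable G A → S ⊆ A := by
  simp only [subset_iff, core, mem_filter, mem_univ, true_and]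
  exact ⟨fun h A hA v hv => h hv A hA, fun h v hv A hA => h A hA hv⟩

theorem card_sdiff_le_card_inter_nbhd {G : SimpleGraph V} {A S : Finset V} (hA : maxStable G A)
    (hS : stable G S) : (S \ A).card ≤ (A ∩ nbhd G S).card := by
  have hdisj : Disjoint (A \ nbhd G S) (S \ A) :=
    disjoint_left.2 fun _ hv hv' => (mem_sdiff.1 hv').2 (mem_sdiff.1 hv).1
  have hexchange : (A \ nbhd G S).card + (S \ A).card ≤ A.card :=
    calc (A \ nbhd G S).card + (S \ A).card = (A \ nbhd G S ∪ S \ A).card :=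
          (card_union_of_disjoint hdisj).symm
      _ ≤ (A \ nbhd G S ∪ S).card := card_le_card (union_subset_union_right sdiff_subset)
      _ ≤ A.card := hA.2 ▸ card_le_alpha (hA.1.sdiff_nbhd_union hS)
  have := card_inter_add_card_sdiff A (nbhd G S)
  omega

theorem card_nbhd_inter_lt {G : SimpleGraph V} {A S : Finset V} (hA : maxStable G A)
    (hS : stable G S) (hlt : (nbhd G S).card < S.card) :
    (nbhd G (S ∩ A)).card < (S ∩ A).card := by
  have hdisj : Disjoint (nbhd G (S ∩ A)) (A ∩ nbhd G S) :=
    (hA.1.disjoint_nbhd_of_subset inter_subset_right).mono_right inter_subset_left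
  have hsub : nbhd G (S ∩ A) ∪ A ∩ nbhd G S ⊆ nbhd G S :=
    union_subset (nbhd_mono inter_subset_left) inter_subset_right
  have hnbhd := card_le_card hsub
  rw [card_union_of_disjoint hdisj] at hnbhd
  have := card_sdiff_le_card_inter_nbhd hA hS
  have := card_inter_add_card_sdiff S A
  omega

theorem stmt1 (G : SimpleGraph V)
    (S₀ : Finset V) (hs : stable G S₀) (hgt : (nbhd G S₀).card < S₀.card)
    (hmin : ∀ S : Finset V, stable G S → (nbhd G S).card < S.card → S₀.card ≤ S.card) :
    S₀ ⊆ core G := by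
  refine subset_core_iff.2 fun A hA => ?_
  have hle : S₀.card ≤ (S₀ ∩ A).card :=
    hmin _ (hs.mono inter_subset_left) (card_nbhd_inter_lt hA hs hgt)
  exact inter_eq_left.1 (eq_of_subset_of_card_le inter_subset_left hle)
end

section
/- A stable set S is a maximum stable set of G if and only if every stable set A of G disjoint from S can be matched into S (i.e., there is a matching saturating A whose edges all go from A to S). -/
open Finset

variable {V : Type*} [Fintype V] [DecidableEq V]

/-!
A stable set `T` with `|T| > |S|` would have `|T \ S| > |S \ T|`; but a matching of `T \ S`
into `S` must land in `S \ T`, since `T` is stable. Conversely, if `S` is maximum and `B ⊆ A`,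
then `(S \ N(B)) ∪ B` is stable, so `|B| ≤ |S ∩ N(B)|`: this is Hall's condition for matching
`A` into `S`.
-/

namespace SimpleGraph

variable {G : SimpleGraph V}

lemma stable_of_subset {S T : Finset V} (hS : stable G S) (hTS : T ⊆ S) : stable G T :=
  fun a ha b hb => hS a (hTS ha) b (hTS hb)

lemma mem_nbhd {B : Finset V} {v : V} : v ∈ nbhd G B ↔ ∃ b ∈ B, G.Adj b v := by
  simp [nbhd]

lemma card_le_alpha {T : Finset V} (hT : stable G T) : T.card ≤ alpha G := by
  classical
  simpa [alpha, hT] using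
    Finset.le_sup (f := fun S : Finset V => if stable G S then S.card else 0) (mem_univ T)

lemma maxStable_iff_forall_card_le {S : Finset V} (hS : stable G S) :
    maxStable G S ↔ ∀ T, stable G T → T.card ≤ S.card := by
  classical
  refine ⟨fun hmax T hT => hmax.2 ▸ card_le_alpha hT, fun hle => ⟨hS, ?_⟩⟩
  refine le_antisymm (card_le_alpha hS) (Finset.sup_le fun T _ => ?_)
  split_ifs with hT
  exacts [hle T hT, Nat.zero_le _]

lemma stable_sdiff_nbhd_union {S B : Finset V} (hS : stable G S) (hB : stable G B) :
    stable G (S \ nbhd G B ∪ B) := by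
  have not_adj_of_notMem_nbhd : ∀ x b, x ∉ nbhd G B → b ∈ B → ¬ G.Adj b x :=
    fun x b hx hb hbx => hx (mem_nbhd.2 ⟨b, hb, hbx⟩)
  intro x hx y hy hxy
  simp only [mem_union, mem_sdiff] at hx hy
  rcases hx with ⟨hxS, hxN⟩ | hxB <;> rcases hy with ⟨hyS, hyN⟩ | hyB
  · exact hS x hxS y hyS hxy
  · exact not_adj_of_notMem_nbhd x y hxN hyB hxy.symm
  · exact not_adj_of_notMem_nbhd y x hyN hxB hxy
  · exact hB x hxB y hyB hxy

lemma card_le_card_inter_nbhd {S B : Finset V} (hS : maxStable G S) (hB : stable G B)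
    (hBS : Disjoint B S) : B.card ≤ (S ∩ nbhd G B).card := by
  have hstable := stable_sdiff_nbhd_union hS.1 hB
  have hdisj : Disjoint (S \ nbhd G B) B := hBS.symm.mono_left sdiff_subset
  have hcard := (maxStable_iff_forall_card_le hS.1).1 hS _ hstable
  rw [card_union_of_disjoint hdisj] at hcard
  have := card_sdiff_add_card_inter S (nbhd G B)
  omega

lemma exists_matching_of_maxStable {S A : Finset V} (hS : maxStable G S) (hA : stable G A)
    (hAS : Disjoint A S) :
    ∃ f : {a : V // a ∈ A} → V,
      Function.Injective f ∧ ∀ a, f a ∈ S ∧ G.Adj a.1 (f a) := by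
  classical
  refine (Fintype.all_card_le_filter_rel_iff_exists_injective
    (fun (a : {a : V // a ∈ A}) v => v ∈ S ∧ G.Adj a.1 v)).1 fun B => ?_
  let B' := B.map (Function.Embedding.subtype _)
  have hB'A : B' ⊆ A := by
    intro v hv
    obtain ⟨b, -, rfl⟩ := mem_map.1 hv
    exact b.2
  calc B.card = B'.card := (card_map _).symm
    _ ≤ (S ∩ nbhd G B').card :=
      card_le_card_inter_nbhd hS (stable_of_subset hA hB'A) (hAS.mono_left hB'A)
    _ ≤ _ := card_le_card fun v hv => by
      simp only [B', mem_nbhd, mem_inter, mem_filter, mem_univ, true_and, mem_map,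
        Function.Embedding.coe_subtype] at hv ⊢
      obtain ⟨hvS, _, ⟨b, hb, rfl⟩, hbv⟩ := hv
      exact ⟨b, hb, hvS, hbv⟩

lemma card_le_of_matching_sdiff {S T : Finset V} (hT : stable G T)
    (f : {a : V // a ∈ T \ S} → V) (hf : Function.Injective f)
    (hfS : ∀ a, f a ∈ S ∧ G.Adj a.1 (f a)) : T.card ≤ S.card := by
  have hf_mem : ∀ a, f a ∈ S \ T := fun a =>
    mem_sdiff.2 ⟨(hfS a).1, fun hfa => hT a.1 (mem_sdiff.1 a.2).1 (f a) hfa (hfS a).2⟩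
  have hcard : (T \ S).card ≤ (S \ T).card := by
    have := Fintype.card_le_of_injective (fun a => (⟨f a, hf_mem a⟩ : {v // v ∈ S \ T}))
      fun a b hab => hf (congrArg Subtype.val hab)
    rwa [Fintype.card_coe, Fintype.card_coe] at this
  have hT' := card_sdiff_add_card_inter T S
  have hS' := card_sdiff_add_card_inter S T
  rw [inter_comm] at hS'
  omega

end SimpleGraph

open SimpleGraph

theorem stmt2 (G : SimpleGraph V) (S : Finset V) (hS : stable G S) :
    maxStable G S ↔
      ∀ A : Finset V, stable G A → Disjoint A S →
        ∃ f : {a : V // a ∈ A} → V, Function.Injective f ∧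
          ∀ a : {a : V // a ∈ A}, f a ∈ S ∧ G.Adj a.1 (f a) := by
  refine ⟨fun hmax A hA hAS => exists_matching_of_maxStable hmax hA hAS, fun hmatch => ?_⟩
  refine (maxStable_iff_forall_card_le hS).2 fun T hT => ?_
  obtain ⟨f, hf, hfS⟩ := hmatch (T \ S) (stable_of_subset hT sdiff_subset) sdiff_disjoint
  exact card_le_of_matching_sdiff hT f hf hfS
end

section
/- If G is a graph without isolated vertices and |core(G)| ≤ 1, then α(G) ≤ |V(G)|/2. -/
open Finset

variable {V : Type*} [Fintype V] [DecidableEq V]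

lemma mem_inf_finsets {s : Finset (Finset V)} {f : Finset V → Finset V} {a : V} :
    a ∈ s.inf f ↔ ∀ i ∈ s, a ∈ f i := by
  induction s using Finset.cons_induction <;> simp [*]

lemma stable_card_le (G : SimpleGraph V) {S : Finset V} (h : stable G S) :
    S.card ≤ alpha G := by
  classical
  have := Finset.le_sup (f := fun S : Finset V => if stable G S then S.card else 0)
    (Finset.mem_univ S)
  simpa [h, alpha] using this

lemma exists_maxStable (G : SimpleGraph V) : ∃ S, maxStable G S := by
  classical
  obtain ⟨S, -, hS⟩ := Finset.exists_mem_eq_sup (Finset.univ : Finset (Finset V))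
    Finset.univ_nonempty (fun S : Finset V => if stable G S then S.card else 0)
  by_cases h : stable G S
  · exact ⟨S, h, by rw [alpha, hS, if_pos h]⟩
  · refine ⟨∅, by intro a ha; simp at ha, ?_⟩
    rw [alpha, hS, if_neg h]; simp

lemma key_lemma (G : SimpleGraph V) (F : Finset (Finset V)) (hF : F.Nonempty)
    (hmax : ∀ S ∈ F, maxStable G S) :
    2 * alpha G ≤ (F.inf id).card + (F.sup id).card := by
  classical
  induction hF using Finset.Nonempty.cons_induction with
  | singleton S =>
      have h := (hmax S (Finset.mem_singleton_self S)).2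
      simp [h]; omega
  | cons S F hS hFne ih =>
      have hSmax : maxStable G S := hmax S (Finset.mem_cons_self _ _)
      have hmax' : ∀ T ∈ F, maxStable G T := fun T hT => hmax T (Finset.mem_cons.2 (Or.inr hT))
      have IH := ih hmax'
      set I : Finset V := F.inf id with hI
      set U : Finset V := F.sup id with hU
      have hIU : I ⊆ U := by
        obtain ⟨S₀, hS₀⟩ := hFne
        exact (Finset.inf_le (f := id) hS₀).trans (Finset.le_sup (f := id) hS₀)
      have hImem : ∀ v ∈ I, ∀ T ∈ F, v ∈ T := by
        intro v hv T hT
        exact mem_inf_finsets.1 hv T hT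
      -- the key stable set
      have hTstable : stable G ((S ∩ U) ∪ I) := by
        intro a ha b hb
        have key : ∀ x ∈ (S ∩ U) ∪ I, ∀ y ∈ I, ¬ G.Adj x y := by
          intro x hx y hy
          rcases Finset.mem_union.1 hx with hx | hx
          · obtain ⟨T, hT, hxT⟩ := Finset.mem_sup.1 (Finset.mem_inter.1 hx).2
            exact (hmax' T hT).1 x hxT y (hImem y hy T hT)
          · obtain ⟨S₀, hS₀⟩ := hFne
            exact (hmax' S₀ hS₀).1 x (hImem x hx S₀ hS₀) y (hImem y hy S₀ hS₀)
        rcases Finset.mem_union.1 hb with hb | hb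
        · rcases Finset.mem_union.1 ha with ha | ha
          · exact hSmax.1 a (Finset.mem_inter.1 ha).1 b (Finset.mem_inter.1 hb).1
          · intro hadj
            exact key b (Finset.mem_union.2 (Or.inl hb)) a ha hadj.symm
        · exact key a ha b hb
      have hTle : ((S ∩ U) ∪ I).card ≤ alpha G := stable_card_le G hTstable
      have e0 : (S ∩ U) ∩ I = S ∩ I := by
        ext x; simp only [Finset.mem_inter]
        exact ⟨fun h => ⟨h.1.1, h.2⟩, fun h => ⟨⟨h.1, hIU h.2⟩, h.2⟩⟩
      have e1 : ((S ∩ U) ∪ I).card + (S ∩ I).card = (S ∩ U).card + I.card := by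
        rw [← e0]; exact Finset.card_union_add_card_inter _ _
      have e2 : (S ∪ U).card + (S ∩ U).card = S.card + U.card :=
        Finset.card_union_add_card_inter _ _
      have hScard : S.card = alpha G := hSmax.2
      rw [Finset.inf_cons, Finset.sup_cons, id_eq, ← hI, ← hU,
        Finset.inf_eq_inter, Finset.sup_eq_union]
      omega

/-  If G has no isolated vertices and |core(G)| ≤ 1, then α(G) ≤ |V(G)|/2. -/
theorem stmt4 (G : SimpleGraph V) (hisol : ∀ v : V, ¬ isolated G v)
    (hcore : (core G).card ≤ 1) :
    2 * alpha G ≤ Fintype.card V := by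
  classical
  set M : Finset (Finset V) := Finset.univ.filter (fun S => maxStable G S) with hM
  obtain ⟨S0, hS0⟩ := exists_maxStable G
  have hMne : M.Nonempty := ⟨S0, by simp [hM, hS0]⟩
  have hmem : ∀ S ∈ M, maxStable G S := by intro S hS; simpa [hM] using hS
  have key := key_lemma G M hMne hmem
  have hcoreq : core G = M.inf id := by
    ext v
    simp only [core, Finset.mem_filter, Finset.mem_univ, true_and, mem_inf_finsets, hM, id_eq]
  by_cases hcov : M.sup id = Finset.univ
  · -- union of all max stable sets is everything
    rcases Finset.eq_empty_or_nonempty (core G) with hc | hc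
    · have h0 : (M.inf id).card = 0 := by rw [← hcoreq, hc]; simp
      have h2 : (M.sup id).card ≤ Fintype.card V := by
        simpa using Finset.card_le_univ (M.sup id)
      omega
    · obtain ⟨v, hv⟩ := hc
      obtain ⟨w, hw⟩ := not_forall.1 (hisol v)
      push_neg at hw
      have hwU : w ∈ M.sup id := by rw [hcov]; exact Finset.mem_univ w
      obtain ⟨T, hT, hwT⟩ := Finset.mem_sup.1 hwU
      have hTmax := hmem T hT
      have hvT : v ∈ T := by
        have := (Finset.mem_filter.1 hv).2
        exact this T hTmax
      exact absurd hw (hTmax.1 v hvT w hwT)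
  · have hss : M.sup id ⊂ Finset.univ := (Finset.subset_univ _).ssubset_of_ne hcov
    have hUlt : (M.sup id).card < Fintype.card V := by
      simpa using Finset.card_lt_card hss
    have hIle : (M.inf id).card ≤ 1 := by rw [← hcoreq]; exact hcore
    omega
end

section
/- Let G be a graph and H = G[V(G) - N[core(G)]]. Then core(H) = ∅. -/
/-!
Let `C = core G` and `U = V ∖ N[C]`. Every maximum stable set `S` of `G` contains `C` and hence
misses `N(C)`, so `S ∩ U = S ∖ C`. Conversely, a stable set `T` of `G[U]` has no neighbour in `C`,
so `T ∪ C` is stable in `G`; thus `α(G[U]) + |C| ≤ α(G) = |S ∖ C| + |C|`, i.e. `S ∩ U` is a maximum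
stable set of `G[U]`. A vertex of `core(G[U])` therefore lies in every maximum stable set of `G`,
i.e. in `C`, which is impossible for a vertex of `U`.
-/

open Finset

variable {V : Type*} [Fintype V] [DecidableEq V]

namespace StableSets

variable (G : SimpleGraph V)

omit [Fintype V] [DecidableEq V] in
lemma stable_empty : stable G ∅ := by
  simp [stable]

omit [Fintype V] [DecidableEq V] in
lemma stable_mono {S T : Finset V} (hS : stable G S) (hTS : T ⊆ S) : stable G T :=
  fun a ha b hb => hS a (hTS ha) b (hTS hb)

omit [DecidableEq V] in
lemma card_le_alpha {S : Finset V} (hS : stable G S) : S.card ≤ alpha G := by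
  classical
  simpa [alpha, hS] using
    Finset.le_sup (f := fun S : Finset V => if stable G S then S.card else 0) (mem_univ S)

omit [DecidableEq V] in
lemma exists_maxStable : ∃ S, maxStable G S := by
  classical
  obtain ⟨S, -, hS⟩ := Finset.exists_mem_eq_sup (univ : Finset (Finset V)) univ_nonempty
    (fun S : Finset V => if stable G S then S.card else 0)
  have hα : alpha G = if stable G S then S.card else 0 := by rw [alpha, hS]
  by_cases h : stable G S
  · exact ⟨S, h, by rw [hα, if_pos h]⟩
  · exact ⟨∅, stable_empty G, by rw [hα, if_neg h, card_empty]⟩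

lemma mem_core {v : V} : v ∈ core G ↔ ∀ S, maxStable G S → v ∈ S := by
  simp [core]

lemma core_subset {S : Finset V} (hS : maxStable G S) : core G ⊆ S :=
  fun _ hv => (mem_core G).1 hv S hS

omit [DecidableEq V] in
lemma mem_nbhd {A : Finset V} {v : V} : v ∈ nbhd G A ↔ ∃ a ∈ A, G.Adj a v := by
  simp [nbhd]

/-- `G[V ∖ N[A]]`. -/
abbrev removeClosedNbhd (A : Finset V) : SimpleGraph {x : V // x ∉ A ∪ nbhd G A} :=
  G.comap Subtype.val

variable {G}

lemma stable_map_val_union {A : Finset V} (hA : stable G A)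
    {T : Finset {x : V // x ∉ A ∪ nbhd G A}} (hT : stable (removeClosedNbhd G A) T) :
    stable G (T.map (Function.Embedding.subtype _) ∪ A) := by
  have not_adj : ∀ t ∈ T, ∀ a ∈ A, ¬ G.Adj a t := fun t _ a ha hadj =>
    t.2 (mem_union_right _ ((mem_nbhd G).2 ⟨a, ha, hadj⟩))
  simp only [stable, mem_union, mem_map, Function.Embedding.coe_subtype]
  rintro _ (⟨s, hs, rfl⟩ | ha) _ (⟨t, ht, rfl⟩ | hb) hadj
  · exact hT s hs t ht hadj
  · exact not_adj s hs _ hb hadj.symm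
  · exact not_adj t ht _ ha hadj
  · exact hA _ ha _ hb hadj

lemma alpha_removeClosedNbhd_add_card_le {A : Finset V} (hA : stable G A) :
    alpha (removeClosedNbhd G A) + A.card ≤ alpha G := by
  obtain ⟨T, hT⟩ := exists_maxStable (removeClosedNbhd G A)
  have hdisj : Disjoint (T.map (Function.Embedding.subtype _)) A := by
    simp only [disjoint_left, mem_map, Function.Embedding.coe_subtype]
    rintro _ ⟨t, -, rfl⟩ ht
    exact t.2 (mem_union_left _ ht)
  simpa [card_union_of_disjoint hdisj, hT.2] using card_le_alpha G (stable_map_val_union hA hT.1)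

/-- A stable set `S ⊇ A` misses `N(A)`, so it meets `V ∖ N[A]` in `S ∖ A`. -/
lemma card_subtype_add_card {A S : Finset V} (hS : stable G S) (hAS : A ⊆ S) :
    (S.subtype (· ∉ A ∪ nbhd G A)).card + A.card = S.card := by
  have hfilter : S.filter (· ∉ A ∪ nbhd G A) = S \ A := by
    ext x
    simp only [mem_filter, mem_sdiff, mem_union, mem_nbhd, not_or, not_exists, not_and]
    refine ⟨fun h => ⟨h.1, h.2.1⟩, fun h => ⟨h.1, h.2, fun a ha => hS a (hAS ha) x h.1⟩⟩
  rw [card_subtype, hfilter, card_sdiff_of_subset hAS, Nat.sub_add_cancel (card_le_card hAS)]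

lemma maxStable_subtype_removeClosedNbhd {A S : Finset V} (hS : maxStable G S) (hAS : A ⊆ S) :
    maxStable (removeClosedNbhd G A) (S.subtype (· ∉ A ∪ nbhd G A)) := by
  have hstable : stable (removeClosedNbhd G A) (S.subtype (· ∉ A ∪ nbhd G A)) :=
    fun a ha b hb => hS.1 a (mem_subtype.1 ha) b (mem_subtype.1 hb)
  have hle := card_le_alpha _ hstable
  have hge := alpha_removeClosedNbhd_add_card_le (stable_mono G hS.1 hAS)
  have hcard := card_subtype_add_card hS.1 hAS
  exact ⟨hstable, by rw [hS.2] at hcard; omega⟩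

lemma val_mem_core_of_mem_core_removeClosedNbhd {A : Finset V} (hA : A ⊆ core G)
    {v : {x : V // x ∉ A ∪ nbhd G A}} (hv : v ∈ core (removeClosedNbhd G A)) :
    (v : V) ∈ core G :=
  (mem_core G).2 fun _ hS => mem_subtype.1 ((mem_core _).1 hv _
    (maxStable_subtype_removeClosedNbhd hS (hA.trans (core_subset G hS))))

end StableSets

theorem stmt13 (G : SimpleGraph V) :
    core (SimpleGraph.comap
      (Subtype.val : {x : V // x ∉ core G ∪ nbhd G (core G)} → V) G) = ∅ :=
  eq_empty_iff_forall_notMem.2 fun v hv =>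
    v.2 (mem_union_left _
      (StableSets.val_mem_core_of_mem_core_removeClosedNbhd subset_rfl hv))
end
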